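/- Let μ be a partition with l(μ) = r (so μ_r > 0), and let μ' be the partition (μ_1, μ_2, …, μ_{r−1}) obtained by deleting the last nonzero part of μ. Let ν be a partition with l(ν) ≤ r and ν_r = μ_r. If ξ is a partition such that μ'/ξ and ν/ξ are both horizontal strips and |μ'/ξ| + |ν/ξ| = μ_r, then ν = μ and ξ = μ'. -/
import Mathlib


open MvPolynomial

/-- A partition: a weakly decreasing sequence of nonnegative integers with
finitely many nonzero terms. `parts i` is the `(i+1)`-st part `λ_{i+1}`
(0-indexed). -/
structure Partition' where
  parts : ℕ → ℕ
  antitone : Antitone parts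
  eventually_zero : ∃ N, parts N = 0

namespace Partition'

/-- The length `l(λ)`: the number of nonzero parts, i.e. the least index
at which the (weakly decreasing) sequence of parts vanishes. -/
noncomputable def length (lam : Partition') : ℕ := sInf {n | lam.parts n = 0}

/-- The size `|λ| = Σᵢ λᵢ`. -/
noncomputable def size (lam : Partition') : ℕ := ∑ᶠ i, lam.parts i

/-- The partition `(μ_1, …, μ_{r-1})` obtained from `μ` by deleting all parts
from the `r`-th one on. -/
def drop (mu : Partition') (r : ℕ) : Partition' where
  parts i := if i + 1 < r then mu.parts i else 0
  antitone := by
    intro i j hij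
    dsimp only
    split_ifs with h1 h2
    · exact mu.antitone hij
    · omega
    · exact Nat.zero_le _
    · exact le_refl 0
  eventually_zero := ⟨r, if_neg (by omega)⟩

end Partition'

/-- `IsHorizontalStrip mu xi` says that the skew shape `μ/ξ` is a horizontal
strip: `μ_i ≥ ξ_i ≥ μ_{i+1}` for all `i ≥ 1`. -/
def IsHorizontalStrip (mu xi : Partition') : Prop :=
  ∀ i, xi.parts i ≤ mu.parts i ∧ mu.parts (i + 1) ≤ xi.parts i

/-- The size `|μ/ξ| = |μ| - |ξ|` of a skew shape, computed as the sum of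
the pointwise differences of the parts. -/
noncomputable def stripSize (mu xi : Partition') : ℕ := ∑ᶠ i, (mu.parts i - xi.parts i)

/-- The complete homogeneous symmetric polynomial `h_d` in `m` variables over `ℤ`,
extended by `h_d = 0` for `d < 0` (and `h_0 = 1`). -/
noncomputable def hpoly (m : ℕ) (d : ℤ) : MvPolynomial (Fin m) ℤ :=
  if 0 ≤ d then MvPolynomial.hsymm (Fin m) ℤ d.toNat else 0

/-- The Schur polynomial `S_λ^{(m)} ∈ ℤ[X_1,…,X_m]`, defined by the Jacobi–Trudi
formula `S_λ^{(m)} = det (h_{λ_i - i + j})_{1 ≤ i,j ≤ N}` with `N = l(λ)`. -/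
noncomputable def schur (m : ℕ) (lam : Partition') : MvPolynomial (Fin m) ℤ :=
  Matrix.det (Matrix.of fun i j : Fin lam.length =>
    hpoly m ((lam.parts i : ℤ) - (i : ℤ) + (j : ℤ)))

/-- The ring homomorphism `p_n : ℤ[X_1,…,X_{n+1}] → ℤ[X_1,…,X_n]` determined by
`X_i ↦ X_i` for `i ≤ n` and `X_{n+1} ↦ 0`. -/
noncomputable def pmap (n : ℕ) : MvPolynomial (Fin (n + 1)) ℤ →ₐ[ℤ] MvPolynomial (Fin n) ℤ :=
  aeval (fun i : Fin (n + 1) => if h : (i : ℕ) < n then X (⟨i, h⟩ : Fin n) else 0)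


lemma parts_zero_of_length_le (lam : Partition') {n : ℕ} (h : lam.length ≤ n) :
    lam.parts n = 0 := by
  have hne : {m | lam.parts m = 0}.Nonempty := lam.eventually_zero
  have := Nat.sInf_mem hne
  exact Nat.le_zero.mp ((lam.antitone h).trans (le_of_eq this))

lemma Partition'.ext' {a b : Partition'} (h : a.parts = b.parts) : a = b := by
  cases a; cases b; simp_all

/-- Let `μ` be a partition with `l(μ) = r` (so `μ_r > 0`), `μ'` the partition
`(μ_1, …, μ_{r-1})`, and `ν` a partition with `l(ν) ≤ r` and `ν_r = μ_r`. If
`ξ` is a partition such that `μ'/ξ` and `ν/ξ` are both horizontal strips and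
`|μ'/ξ| + |ν/ξ| = μ_r`, then `ν = μ` and `ξ = μ'`. -/
theorem strip_of_last_part_eq (r : ℕ) (hr : 1 ≤ r) (mu : Partition')
    (hlen : mu.length = r) (hpos : 0 < mu.parts (r - 1))
    (nu : Partition') (hnu : nu.length ≤ r)
    (heq : nu.parts (r - 1) = mu.parts (r - 1))
    (xi : Partition')
    (h1 : IsHorizontalStrip (mu.drop r) xi) (h2 : IsHorizontalStrip nu xi)
    (hsize : stripSize (mu.drop r) xi + stripSize nu xi = mu.parts (r - 1)) :
    nu = mu ∧ xi = mu.drop r := by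
  have hmu0 : ∀ i, r ≤ i → mu.parts i = 0 := fun i hi =>
    parts_zero_of_length_le mu (hlen ▸ hi)
  have hnu0 : ∀ i, r ≤ i → nu.parts i = 0 := fun i hi =>
    parts_zero_of_length_le nu (hnu.trans hi)
  have hdrop : ∀ i, (mu.drop r).parts i = if i + 1 < r then mu.parts i else 0 := fun i => rfl
  have hxi0 : ∀ i, r - 1 ≤ i → xi.parts i = 0 := by
    intro i hi
    have := (h1 i).1
    rw [hdrop, if_neg (by omega)] at this
    omega
  set f : ℕ → ℕ := fun i => (mu.drop r).parts i - xi.parts i with hf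
  set g : ℕ → ℕ := fun i => nu.parts i - xi.parts i with hg
  have hfsub : Function.support f ⊆ (Finset.range r : Finset ℕ) := by
    intro i hi
    simp only [Function.mem_support, hf] at hi
    by_contra hc
    simp only [Finset.coe_range, Set.mem_Iio, not_lt] at hc
    rw [hdrop, if_neg (by omega)] at hi
    omega
  have hgsub : Function.support g ⊆ (Finset.range r : Finset ℕ) := by
    intro i hi
    simp only [Function.mem_support, hg] at hi
    by_contra hc
    simp only [Finset.coe_range, Set.mem_Iio, not_lt] at hc
    rw [hnu0 i hc] at hi
    omega
  have hsf : stripSize (mu.drop r) xi = ∑ i ∈ Finset.range r, f i :=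
    finsum_eq_sum_of_support_subset f hfsub
  have hsg : stripSize nu xi = ∑ i ∈ Finset.range r, g i :=
    finsum_eq_sum_of_support_subset g hgsub
  have hgr : g (r - 1) = mu.parts (r - 1) := by
    simp only [hg, hxi0 (r-1) le_rfl, heq, Nat.sub_zero]
  have hmem : r - 1 ∈ Finset.range r := Finset.mem_range.mpr (by omega)
  have hge : mu.parts (r - 1) ≤ ∑ i ∈ Finset.range r, g i := by
    rw [← hgr]
    exact Finset.single_le_sum (fun i _ => Nat.zero_le _) hmem
  have hf0 : ∀ i, f i = 0 := by
    intro i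
    have hfz : ∑ j ∈ Finset.range r, f j = 0 := by omega
    by_cases hc : i ∈ Finset.range r
    · exact (Finset.sum_eq_zero_iff.mp hfz) i hc
    · by_contra h
      exact hc (hfsub h)
  have hg0 : ∀ i, i ≠ r - 1 → g i = 0 := by
    intro i hi
    have hsum : ∑ j ∈ Finset.range r, g j = mu.parts (r - 1) := by omega
    by_cases hc : i ∈ Finset.range r
    · have hsplit := Finset.add_sum_erase _ g hmem
      have hle : g i ≤ ∑ j ∈ (Finset.range r).erase (r-1), g j :=
        Finset.single_le_sum (fun j _ => Nat.zero_le _)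
          (Finset.mem_erase.mpr ⟨hi, hc⟩)
      omega
    · by_contra h
      exact hc (hgsub h)
  have hxieq : ∀ i, xi.parts i = (mu.drop r).parts i := by
    intro i
    have h0 := hf0 i
    have hle := (h1 i).1
    simp only [hf] at h0
    omega
  have hnueq : ∀ i, nu.parts i = mu.parts i := by
    intro i
    rcases lt_trichotomy i (r - 1) with h | h | h
    · have h0 := hg0 i (by omega)
      have hle := (h2 i).1
      have hx := hxieq i
      rw [hdrop, if_pos (by omega)] at hx
      simp only [hg] at h0
      omega
    · rw [h, heq]
    · rw [hnu0 i (by omega), hmu0 i (by omega)]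
  exact ⟨Partition'.ext' (funext hnueq), Partition'.ext' (funext hxieq)⟩
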